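/- In the parking process on a rooted tree, if t' is a subtree obtained from t by adding vertices and cars (i.e., t ⊆ t' as rooted trees with the car arrival configuration on t being the restriction of that on t'), then the number of cars passing through the root satisfies ψ(t) ≤ ψ(t'). In particular, along an increasing (for inclusion) sequence of rooted trees with i.i.d.-assigned car arrivals, the flux at the root is non-decreasing. -/
import Mathlib


/-- A plane rooted tree in which every vertex carries a number of arriving cars. -/
inductive CTree : Type
  | node : ℕ → List CTree → CTree

namespace CTree

/-- `psi t` is the number of cars passing by (visiting) the root in the parking process
on `t`: the cars arriving at the root plus, for each child subtree, the flux of cars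
exiting that subtree. -/
def psi : CTree → ℕ
  | .node c ts => c + (ts.attach.map (fun t => psi t.1 - 1)).sum
  decreasing_by
    have := List.sizeOf_lt_of_mem t.2
    simp only [CTree.node.sizeOf_spec]
    omega

/-- `phi t` is the flux: the number of cars exiting the tree at the root. -/
def phi (t : CTree) : ℕ := psi t - 1

/-- `Le t t'` means that the rooted tree `t` together with its car arrivals is
included in `t'`: `t'` is obtained from `t` by adding vertices (whole subtrees,
anywhere) and cars, the car configuration of `t` being dominated by the restriction
of that of `t'`. -/
inductive Le : CTree → CTree → Prop
  | node {c c' : ℕ} {ts ts' us : List CTree} :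
      c ≤ c' → us.Sublist ts' → List.Forall₂ Le ts us → Le (.node c ts) (.node c' ts')


theorem psi_eq (c : ℕ) (ts : List CTree) :
    psi (.node c ts) = c + (ts.map phi).sum := by
  rw [psi]
  simp [phi]
  rfl

mutual

theorem psi_le : ∀ t t', Le t t' → psi t ≤ psi t'
  | .node c ts, .node c' ts', h => by
    cases h with
    | @node _ _ _ _ us hc hsub hf =>
      rw [psi_eq, psi_eq]
      have h1 : (ts.map phi).sum ≤ (us.map phi).sum := by
        refine List.Forall₂.sum_le_sum ?_
        rw [List.forall₂_map_right_iff, List.forall₂_map_left_iff]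
        exact forall_phi_le ts us hf
      have h2 : (us.map phi).sum ≤ (ts'.map phi).sum :=
        List.Sublist.sum_le_sum (hsub.map phi) (fun a _ => Nat.zero_le a)
      omega
termination_by t _ _ => sizeOf t

theorem forall_phi_le : ∀ ts us, List.Forall₂ Le ts us →
    List.Forall₂ (fun a b => phi a ≤ phi b) ts us
  | [], [], _ => .nil
  | a :: ts, b :: us, h => by
    cases h with
    | cons hab h =>
      refine .cons ?_ (forall_phi_le ts us h)
      have := psi_le a b hab
      simp only [phi]
      omega
termination_by ts _ _ => sizeOf ts

end

end CTree

open CTree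

/-- Monotonicity (abelian property) of the parking process: if `t ⊆ t'` (adding
vertices and cars), then the number of cars passing through the root satisfies
`ψ(t) ≤ ψ(t')`; in particular the flux at the root is non-decreasing along an
increasing sequence of trees with car arrivals. -/
theorem psi_mono {t t' : CTree} (h : Le t t') : psi t ≤ psi t' ∧ phi t ≤ phi t' := by
  have := psi_le t t' h
  exact ⟨this, by simp only [phi]; omega⟩
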